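/- Let n ≥ 1 and let k ∈ ℕ^{n+1} with k_0 = 0, and let k̃ = (k_1,…,k_n,0) be the left shift of k. Then for every x ∈ [-1,1]^{n+1}: b(x,k) = Σ_{m ∈ ℕ^{n+1}, m_j ≤ min{k_j, k̃_j} for all j} Π_{j=0}^{n} C(k_j,m_j) · C(k̃_j,m_j) · (-x_j)^{k̃_j - m_j} · x_j^{k_j - m_j} · (1 - x_j^2)^{m_j} · √(1 - x_j^2). -/

import Mathlib

/-- Amplitude factor `g^{(p,q)}`. -/
noncomputable def ampG (p q : ℤ) (x : ℝ) : ℝ :=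
  if p < 0 ∨ q < 0 then 0
  else Real.sqrt (1 - x ^ 2) * ∑ j ∈ Finset.Icc 0 (min p q).toNat,
    (-1 : ℝ) ^ (q.toNat - j) * (p.toNat.choose j : ℝ) * (q.toNat.choose j : ℝ) *
      x ^ (p.toNat + q.toNat - 2 * j) * (1 - x ^ 2) ^ j

/-- Amplitude quasi-polynomial `b(x,k)`. -/
noncomputable def ampB (n : ℕ) (x : Fin (n+1) → ℝ) (k : Fin (n+1) → ℕ) : ℝ :=
  (if k 0 = 0 then (1:ℝ) else 0) * Real.sqrt (1 - x (Fin.last n) ^ 2) *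
    x (Fin.last n) ^ k (Fin.last n) *
    ∏ j : Fin n, ampG (k j.castSucc) (k j.succ) (x j.castSucc)
/-- Left shift `k̃ = (k_1,…,k_n,0)` of a lattice point `k ∈ ℕ^{n+1}`. -/
def lshift (n : ℕ) (k : Fin (n+1) → ℕ) (j : Fin (n+1)) : ℕ :=
  if h : (j : ℕ) < n then k ⟨(j : ℕ) + 1, by omega⟩ else 0

/- The expansion factors coordinatewise: splitting `(-1)^{q-m} x^{p+q-2m}` as `(-x)^{q-m} x^{p-m}`
turns `g^{(k_j, k̃_j)}` for `j < n` into a sum of the summands in the claim, and the last factor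
`√(1 - x_n²) x_n^{k_n}` is the `k̃_n = 0` case of the same summand. Distributing the product
of these sums over the box `Π_j [0, min (k_j, k̃_j)]` gives the claim. -/

noncomputable def ampTerm (p q : ℕ) (x : ℝ) (m : ℕ) : ℝ :=
  (p.choose m : ℝ) * (q.choose m : ℝ) * (-x) ^ (q - m) * x ^ (p - m) *
    (1 - x ^ 2) ^ m * Real.sqrt (1 - x ^ 2)

lemma ampG_natCast_eq_sum_ampTerm (p q : ℕ) (x : ℝ) :
    ampG p q x = ∑ m ∈ Finset.Icc 0 (min p q), ampTerm p q x m := by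
  rw [ampG, if_neg (by simp), Finset.mul_sum, ← Nat.cast_min, Int.toNat_natCast]
  refine Finset.sum_congr rfl fun m hm => ?_
  obtain ⟨-, hm⟩ := Finset.mem_Icc.mp hm
  have hdeg : p + q - 2 * m = (p - m) + (q - m) := by omega
  rw [Int.toNat_natCast, Int.toNat_natCast, hdeg, pow_add, ampTerm, neg_pow]
  ring

lemma sum_ampTerm_zero_right (p : ℕ) (x : ℝ) :
    ∑ m ∈ Finset.Icc 0 (min p 0), ampTerm p 0 x m = Real.sqrt (1 - x ^ 2) * x ^ p := by
  simp [ampTerm, mul_comm]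

lemma lshift_castSucc (n : ℕ) (k : Fin (n+1) → ℕ) (j : Fin n) :
    lshift n k j.castSucc = k j.succ := by
  simp [lshift, Fin.succ]

lemma lshift_last (n : ℕ) (k : Fin (n+1) → ℕ) : lshift n k (Fin.last n) = 0 := by
  simp [lshift]

theorem amplitude_quasipolynomial_expansion_general (n : ℕ) (k : Fin (n+1) → ℕ)
    (hk0 : k 0 = 0) (x : Fin (n+1) → ℝ) :
    ampB n x k =
      ∑ m ∈ Fintype.piFinset (fun j : Fin (n+1) =>
          Finset.Icc 0 (min (k j) (lshift n k j))),
        ∏ j : Fin (n+1),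
          ((k j).choose (m j) : ℝ) * ((lshift n k j).choose (m j) : ℝ) *
            (-(x j)) ^ (lshift n k j - m j) * (x j) ^ (k j - m j) *
            (1 - x j ^ 2) ^ (m j) * Real.sqrt (1 - x j ^ 2) := by
  refine .trans ?_ (Finset.prod_univ_sum (fun j => Finset.Icc 0 (min (k j) (lshift n k j)))
    fun j => ampTerm (k j) (lshift n k j) (x j))
  rw [Fin.prod_univ_castSucc, lshift_last, sum_ampTerm_zero_right,
    ampB, hk0, if_pos rfl, one_mul, mul_comm]
  congr 1
  refine Finset.prod_congr rfl fun j _ => ?_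
  rw [lshift_castSucc, ampG_natCast_eq_sum_ampTerm]

/-- explicit multinomial expansion of the amplitude quasi-polynomial `b(x,k)`. -/
theorem amplitude_quasipolynomial_expansion (n : ℕ) (hn : 1 ≤ n) (k : Fin (n+1) → ℕ)
    (hk0 : k 0 = 0) (x : Fin (n+1) → ℝ) (hx : ∀ j, x j ∈ Set.Icc (-1 : ℝ) 1) :
    ampB n x k =
      ∑ m ∈ Fintype.piFinset (fun j : Fin (n+1) =>
          Finset.Icc 0 (min (k j) (lshift n k j))),
        ∏ j : Fin (n+1),
          ((k j).choose (m j) : ℝ) * ((lshift n k j).choose (m j) : ℝ) *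
            (-(x j)) ^ (lshift n k j - m j) * (x j) ^ (k j - m j) *
            (1 - x j ^ 2) ^ (m j) * Real.sqrt (1 - x j ^ 2) :=
  amplitude_quasipolynomial_expansion_general n k hk0 x
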